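/- arXiv:0710.0493 — 4 statements merged into one kernel-verified Lean document; each statement's English description precedes it below -/
import Mathlib

section
/- The unique formal power series A ∈ ℚ[[t]] with zero constant term satisfying A^n - A + t = 0 (for fixed n ≥ 2) is A(t) = Σ_{m≥0} binom(mn, m)·t^{m(n-1)+1}/(m(n-1)+1). -/
/-!
Over any commutative ring, `A ↦ Aⁿ + X` is a contraction for the `X`-adic valuation on series
without constant term (`n ≥ 2`), so `A = Aⁿ + X` determines the coefficients of `A` one at a time,
and a solution exists and is unique.

For the coefficients, differentiate `Aⁿ = A - X` and multiply by `A` to get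
`n X A' = (n - 1) A A' + A`. Multiplying by `(i + 1) (i + 2) Aⁱ` turns this into a first-order
relation between the coefficient of `X ^ m` in `Aⁱ⁺¹` and that of `X ^ (m + 1)` in `Aⁱ⁺²`.
Running it from `A` up to `Aⁿ = A - X` expresses the coefficient of `X ^ (K + n)` in `A` through
that of `X ^ (K + 1)`; the Lagrange-inversion values obey the same relation, and a strong induction
on the exponent concludes.
-/

open PowerSeries

namespace PowerSeries

section CommRing

variable {R : Type*} [CommRing R]

theorem coeff_pow_eq_of_coeff_eq {n k : ℕ} (hn : 2 ≤ n) {f g : R⟦X⟧}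
    (hf : constantCoeff f = 0) (hg : constantCoeff g = 0)
    (h : ∀ j < k, coeff j f = coeff j g) :
    coeff k (f ^ n) = coeff k (g ^ n) := by
  have hfg : X ^ k ∣ f - g := X_pow_dvd_iff.mpr fun j hj => by rw [map_sub, h j hj, sub_self]
  have hsum : X ∣ ∑ i ∈ Finset.range n, f ^ i * g ^ (n - 1 - i) := by
    refine Finset.dvd_sum fun i _ => ?_
    rcases Nat.eq_zero_or_pos i with rfl | hi0
    · exact dvd_mul_of_dvd_right (dvd_pow (X_dvd_iff.mpr hg) (by grind)) _
    · exact dvd_mul_of_dvd_left (dvd_pow (X_dvd_iff.mpr hf) hi0.ne') _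
  have hpow : X ^ (k + 1) ∣ f ^ n - g ^ n := by
    rw [← geom_sum₂_mul, pow_succ']
    exact mul_dvd_mul hsum hfg
  rw [← sub_eq_zero, ← map_sub]
  exact X_pow_dvd_iff.mp hpow k k.lt_succ_self

theorem eq_of_pow_sub_add_X_eq_zero {n : ℕ} (hn : 2 ≤ n) {A B : R⟦X⟧}
    (hA0 : constantCoeff A = 0) (hA : A ^ n - A + X = 0)
    (hB0 : constantCoeff B = 0) (hB : B ^ n - B + X = 0) : A = B := by
  ext k
  induction k using Nat.strong_induction_on with
  | _ k ih =>
    rw [show A = A ^ n + X by linear_combination -hA, show B = B ^ n + X by linear_combination -hB,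
      map_add, map_add, coeff_pow_eq_of_coeff_eq hn hA0 hB0 ih]

noncomputable def fixedPointCoeff (n : ℕ) : ℕ → R
  | k => if k = 0 then 0 else
      coeff k ((mk fun j => if j < k then fixedPointCoeff n j else 0) ^ n + X)
  termination_by k => k

theorem exists_pow_sub_add_X_eq_zero {n : ℕ} (hn : 2 ≤ n) :
    ∃ A : R⟦X⟧, constantCoeff A = 0 ∧ A ^ n - A + X = 0 := by
  set A : R⟦X⟧ := mk (fixedPointCoeff n)
  have hA0 : constantCoeff A = 0 := by
    rw [← coeff_zero_eq_constantCoeff_apply, coeff_mk, fixedPointCoeff, if_pos rfl]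
  refine ⟨A, hA0, ?_⟩
  suffices A = A ^ n + X by linear_combination -this
  ext k
  rcases Nat.eq_zero_or_pos k with rfl | hk
  · simp [hA0, zero_pow (by omega : n ≠ 0)]
  · set T : R⟦X⟧ := mk fun j => if j < k then fixedPointCoeff n j else 0
    have hT0 : constantCoeff T = 0 := by
      rw [← coeff_zero_eq_constantCoeff_apply, coeff_mk, if_pos hk, fixedPointCoeff, if_pos rfl]
    have hTA : ∀ j < k, coeff j T = coeff j A := fun j hj => by
      rw [coeff_mk, if_pos hj, coeff_mk]
    rw [coeff_mk, fixedPointCoeff, if_neg hk.ne', map_add, map_add,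
      coeff_pow_eq_of_coeff_eq hn hT0 hA0 hTA]

theorem coeff_X_mul_derivative (f : R⟦X⟧) (m : ℕ) :
    coeff m (X * d⁄dX R f) = m * coeff m f := by
  cases m with
  | zero => simp
  | succ m => rw [coeff_succ_X_mul, coeff_derivative, mul_comm]; push_cast; ring

variable {n : ℕ} {A : R⟦X⟧}

theorem X_mul_derivative_of_pow_sub_add_X_eq_zero (hn : 1 ≤ n) (hA : A ^ n - A + X = 0) :
    (n : R⟦X⟧) * X * d⁄dX R A = ((n : R⟦X⟧) - 1) * A * d⁄dX R A + A := by
  have hderiv : (n : R⟦X⟧) * A ^ (n - 1) * d⁄dX R A = d⁄dX R A - 1 := by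
    have h := congrArg (d⁄dX R) hA
    rw [map_add, map_sub, derivative_pow, derivative_X, map_zero] at h
    linear_combination h
  have hpow : A ^ (n - 1) * A = A ^ n := by rw [← pow_succ, Nat.sub_add_cancel hn]
  linear_combination (-A) * hderiv + ((n : R⟦X⟧) * d⁄dX R A) * (hpow + hA)

theorem coeff_pow_succ_of_pow_sub_add_X_eq_zero (hn : 1 ≤ n) (hA : A ^ n - A + X = 0)
    (i m : ℕ) :
    ((n : R) - 1) * (i + 1) * (m + 1) * coeff (m + 1) (A ^ (i + 2)) =
      (i + 2) * (n * m - (i + 1)) * coeff m (A ^ (i + 1)) := by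
  have hpow : C (((i : R) + 2) * n) * (X * d⁄dX R (A ^ (i + 1))) =
      C (((n : R) - 1) * (i + 1)) * d⁄dX R (A ^ (i + 2)) +
        C (((i : R) + 1) * (i + 2)) * A ^ (i + 1) := by
    simp only [derivative_pow, Nat.add_sub_cancel, map_mul, map_add, map_sub, map_natCast,
      map_ofNat, map_one]
    push_cast
    linear_combination (((i : R⟦X⟧) + 1) * (i + 2) * A ^ i) *
      X_mul_derivative_of_pow_sub_add_X_eq_zero hn hA
  have h := congrArg (coeff m) hpow
  rw [map_add, coeff_C_mul, coeff_C_mul, coeff_C_mul, coeff_X_mul_derivative,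
    coeff_derivative] at h
  linear_combination -h

end CommRing

section Field

variable {𝕜 : Type*} [Field 𝕜]

/-- The coefficient of `X ^ (K + j + 1)` in `Aʲ⁺¹` for the solution `A` of `Aⁿ - A + X = 0`,
as given by Lagrange inversion. -/
noncomputable def lagrangeCoeff (𝕜 : Type*) [Field 𝕜] (n K j : ℕ) : 𝕜 :=
  if n - 1 ∣ K then
    (j + 1) / (K + j + 1) * ((K / (n - 1) * n + j).choose (K / (n - 1)) : 𝕜)
  else 0

theorem lagrangeCoeff_recurrence [CharZero 𝕜] {n : ℕ} (hn : 2 ≤ n) (K j : ℕ) :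
    ((n : 𝕜) - 1) * (j + 1) * (K + j + 2) * lagrangeCoeff 𝕜 n K (j + 1) =
      (j + 2) * (n * (K + j + 1) - (j + 1)) * lagrangeCoeff 𝕜 n K j := by
  unfold lagrangeCoeff
  split_ifs with hK
  · obtain ⟨q, rfl⟩ := hK
    obtain ⟨p, rfl⟩ : ∃ p, n = p + 1 := ⟨n - 1, by omega⟩
    have hchoose : ((q * (p + 1) + j).choose q * (q * (p + 1) + j + 1) : 𝕜) =
        (q * (p + 1) + j + 1).choose q * (p * q + j + 1) := by
      have h := Nat.choose_mul_succ_eq (q * (p + 1) + j) q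
      rw [show q * (p + 1) + j + 1 - q = p * q + j + 1 by grind] at h
      exact_mod_cast h
    simp only [Nat.add_sub_cancel, Nat.mul_div_cancel_left q (by omega : 0 < p), ← add_assoc]
    have h1 : ((p * q + j + 1 : ℕ) : 𝕜) ≠ 0 := Nat.cast_ne_zero.mpr (by omega)
    have h2 : ((p * q + (j + 1) + 1 : ℕ) : 𝕜) ≠ 0 := Nat.cast_ne_zero.mpr (by omega)
    push_cast at h1 h2 ⊢
    field_simp
    linear_combination -((p : 𝕜) * (p * q + j + 2) * (j + 2)) * hchoose
  · ring

theorem lagrangeCoeff_sub_one {n : ℕ} (hn : 2 ≤ n) (K : ℕ) :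
    lagrangeCoeff 𝕜 n K (n - 1) = lagrangeCoeff 𝕜 n (K + (n - 1)) 0 := by
  obtain ⟨p, rfl⟩ : ∃ p, n = p + 1 := ⟨n - 1, by omega⟩
  unfold lagrangeCoeff
  simp only [Nat.add_sub_cancel, Nat.dvd_add_self_right, add_zero]
  split_ifs with hK
  · obtain ⟨q, rfl⟩ := hK
    have hchoose : (p + 1) * (q * (p + 1) + p).choose q = ((q + 1) * (p + 1)).choose (q + 1) := by
      have h := Nat.add_one_mul_choose_eq (q * (p + 1) + p) q
      rw [show q * (p + 1) + p + 1 = (q + 1) * (p + 1) by ring] at h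
      exact Nat.eq_of_mul_eq_mul_left (by omega : 0 < q + 1) (by linear_combination h)
    rw [show p * q + p = p * (q + 1) by ring, Nat.mul_div_cancel_left _ (by omega : 0 < p),
      Nat.mul_div_cancel_left _ (by omega : 0 < p), ← hchoose]
    push_cast
    ring
  · rfl

theorem lagrangeCoeff_zero_of_lt {n K : ℕ} (hK : K < n - 1) :
    lagrangeCoeff 𝕜 n K 0 = if K = 0 then 1 else 0 := by
  unfold lagrangeCoeff
  split_ifs with hdvd h0 h0
  · simp [h0]
  · exact absurd (Nat.eq_zero_of_dvd_of_lt hdvd hK) h0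
  · exact absurd (h0 ▸ dvd_zero _) hdvd
  · rfl

variable [CharZero 𝕜] {n : ℕ} {A : 𝕜⟦X⟧}

theorem coeff_pow_eq_lagrangeCoeff (hn : 2 ≤ n) (hA : A ^ n - A + X = 0) {K : ℕ}
    (hK : coeff (K + 1) A = lagrangeCoeff 𝕜 n K 0) (j : ℕ) :
    coeff (K + j + 1) (A ^ (j + 1)) = lagrangeCoeff 𝕜 n K j := by
  induction j with
  | zero => simpa using hK
  | succ j ih =>
    have hn1 : (n : 𝕜) - 1 ≠ 0 := sub_ne_zero.mpr (by exact_mod_cast (by omega : n ≠ 1))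
    have hne : ((n : 𝕜) - 1) * (j + 1) * (K + j + 2) ≠ 0 :=
      mul_ne_zero (mul_ne_zero hn1 (by exact_mod_cast j.succ_ne_zero))
        (by exact_mod_cast (by omega : K + j + 2 ≠ 0))
    have hrec := coeff_pow_succ_of_pow_sub_add_X_eq_zero (by omega) hA j (K + j + 1)
    push_cast at hrec
    rw [ih, ← lagrangeCoeff_recurrence hn] at hrec
    show coeff (K + j + 1 + 1) (A ^ (j + 2)) = _
    exact mul_left_cancel₀ hne (by linear_combination hrec)

theorem coeff_succ_eq_lagrangeCoeff (hn : 2 ≤ n) (hA0 : constantCoeff A = 0)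
    (hA : A ^ n - A + X = 0) (K : ℕ) : coeff (K + 1) A = lagrangeCoeff 𝕜 n K 0 := by
  have hAn : A ^ n = A - X := by linear_combination hA
  induction K using Nat.strong_induction_on with
  | _ K ih =>
    rcases lt_or_ge K (n - 1) with hK | hK
    · have hzero : coeff (K + 1) (A ^ n) = 0 :=
        X_pow_dvd_iff.mp (pow_dvd_pow_of_dvd (X_dvd_iff.mpr hA0) n) _ (by omega)
      rw [hAn, map_sub, coeff_X, sub_eq_zero] at hzero
      simp [hzero, lagrangeCoeff_zero_of_lt hK]
    · obtain ⟨K, rfl⟩ : ∃ K', K = K' + (n - 1) := ⟨K - (n - 1), by omega⟩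
      rw [← lagrangeCoeff_sub_one hn, ← coeff_pow_eq_lagrangeCoeff hn hA (ih K (by omega)),
        Nat.sub_add_cancel (by omega), hAn, map_sub, coeff_X, if_neg (by omega), sub_zero]

end Field

end PowerSeries

/-- The unique power series `A` with zero constant term satisfying `Aⁿ - A + t = 0`
is `A(t) = Σ_{m≥0} binom(mn,m) t^{m(n-1)+1}/(m(n-1)+1)`. -/
theorem stmt_4 (n : ℕ) (hn : 2 ≤ n) :
    (∃! A : PowerSeries ℚ, PowerSeries.constantCoeff A = 0 ∧
        A ^ n - A + PowerSeries.X = 0) ∧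
    ∀ A : PowerSeries ℚ, PowerSeries.constantCoeff A = 0 →
      A ^ n - A + PowerSeries.X = 0 →
      A = PowerSeries.mk (fun k =>
        if (n - 1) ∣ (k - 1) ∧ k ≠ 0 then
          (Nat.choose ((k - 1) / (n - 1) * n) ((k - 1) / (n - 1)) : ℚ) / k
        else 0) := by
  obtain ⟨A, hA0, hA⟩ := exists_pow_sub_add_X_eq_zero (R := ℚ) hn
  refine ⟨⟨A, ⟨hA0, hA⟩, fun B hB => eq_of_pow_sub_add_X_eq_zero hn hB.1 hB.2 hA0 hA⟩,
    fun B hB0 hB => ?_⟩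
  ext k
  rw [coeff_mk]
  cases k with
  | zero => simpa using hB0
  | succ K =>
    rw [coeff_succ_eq_lagrangeCoeff hn hB0 hB K, lagrangeCoeff]
    simp [div_eq_inv_mul]
end

section
/- The k-th super-Catalan number s_k equals (1/(2k))·Σ_{j=1}^{k-1} binom(k,j)·binom(k-2, j-1)·2^j for all k ≥ 2. -/
/-!
Writing `S = ∑ sₖ tᵏ`, the recurrence says `S - t = S² / (1 - S)`, i.e. `2S² - (1 + t)S + t = 0`.
Differentiating and eliminating `S` with the quadratic gives the linear differential equation
`(1 - 6t + t²) S' + (3 - t) S = 1 - t`, hence the three-term recurrence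
`(m + 3) s_{m+3} = 3(2m + 3) s_{m+2} - m s_{m+1}`. The closed form satisfies the same recurrence,
which is checked with a Zeilberger certificate: the recurrence applied to the summand telescopes.
As the recurrence at `m = 0` determines `s₃` from `s₂` alone, the value `s₂ = 1` pins everything down.
-/

open Finset PowerSeries

theorem Nat.cast_add_one_choose_mul {R : Type*} [CommRing R] (n k : ℕ) :
    ((n + 1).choose k : R) * (n + 1 - k) = n.choose k * (n + 1) := by
  rcases le_or_gt k n with hkn | hnk
  · have h := congrArg (Nat.cast : ℕ → R) (Nat.choose_mul_succ_eq n k)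
    push_cast [Nat.sub_add_comm hkn, Nat.cast_sub hkn] at h
    rw [h]
    ring
  · rcases Nat.lt_or_eq_of_le hnk with h | rfl
    · simp [Nat.choose_eq_zero_of_lt h, Nat.choose_eq_zero_of_lt hnk]
    · simp

theorem Nat.cast_choose_add_one_mul {R : Type*} [CommRing R] (n k : ℕ) :
    (n.choose (k + 1) : R) * (k + 1) = n.choose k * (n - k) := by
  rcases le_or_gt k n with hkn | hnk
  · have h := congrArg (Nat.cast : ℕ → R) (Nat.choose_succ_right_eq n k)
    push_cast [hkn] at h
    exact h
  · simp [Nat.choose_eq_zero_of_lt hnk, Nat.choose_eq_zero_of_lt (hnk.trans (Nat.lt_succ_self k))]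

namespace PowerSeries

section CommSemiring

variable {R : Type*} [CommSemiring R]

theorem coeff_pow_eq_sum_antidiagonalTuple (φ : R⟦X⟧) (n k : ℕ) :
    coeff k (φ ^ n) = ∑ f ∈ Nat.antidiagonalTuple n k, ∏ i, coeff (f i) φ := by
  classical
  rw [← piAntidiag_univ_fin_eq_antidiagonalTuple, ← Fin.prod_const, coeff_prod, finsuppAntidiag,
    sum_map, ← sum_attach (piAntidiag univ k)]
  rfl

theorem coeff_pow_eq_zero_of_lt {S : R⟦X⟧} (hS : constantCoeff S = 0) {n k : ℕ} (h : k < n) :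
    coeff k (S ^ n) = 0 :=
  X_pow_dvd_iff.mp (pow_dvd_pow_of_dvd (X_dvd_iff.mpr hS) n) k h

end CommSemiring

variable {R : Type*} [CommRing R]

theorem quadratic_of_eq_sum_coeff_pow {a : ℕ → R} (h0 : a 0 = 0) (h1 : a 1 = 1)
    (hrec : ∀ k, 2 ≤ k → a k = ∑ n ∈ Icc 2 k, coeff k (mk a ^ n)) :
    2 * mk a ^ 2 + X = (1 + X) * mk a := by
  set S := mk a
  have hS : constantCoeff S = 0 := by simp [S, h0]
  have htrunc : ∀ N, X ^ N ∣ S - X - ∑ n ∈ Ico 2 N, S ^ n := by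
    intro N
    refine X_pow_dvd_iff.mpr fun j hj => ?_
    rw [map_sub, map_sub, map_sum, ← sum_subset (s₁ := Icc 2 j) ?_ ?_]
    · rcases lt_or_ge j 2 with hj2 | hj2
      · interval_cases j <;> simp [S, h0, h1]
      · rw [coeff_X, if_neg (by omega), ← hrec j hj2]
        simp [S]
    · intro n hn
      simp only [mem_Icc, mem_Ico] at hn ⊢
      omega
    · intro n hn hn'
      simp only [mem_Icc, mem_Ico, not_and, not_le] at hn hn'
      exact coeff_pow_eq_zero_of_lt hS (hn' hn.1)
  have hquad : (1 - S) * (S - X) = S ^ 2 := by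
    rw [← sub_eq_zero]
    ext k
    have hgeom := geom_sum_Ico_mul S (show 2 ≤ k + 2 by omega)
    have hdvd : X ^ (k + 2) ∣ (1 - S) * (S - X) - S ^ 2 := by
      rw [show (1 - S) * (S - X) - S ^ 2
          = (1 - S) * (S - X - ∑ n ∈ Ico 2 (k + 2), S ^ n) - S ^ (k + 2) by
        linear_combination -hgeom]
      exact dvd_sub (dvd_mul_of_dvd_right (htrunc _) _) (pow_dvd_pow_of_dvd (X_dvd_iff.mpr hS) _)
    simpa using X_pow_dvd_iff.mp hdvd k (by omega)
  linear_combination -hquad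

theorem derivative_eq_of_quadratic {S : R⟦X⟧} (h : 2 * S ^ 2 + X = (1 + X) * S) :
    (1 - 6 * X + X ^ 2) * d⁄dX R S + (3 - X) * S = 1 - X := by
  have h' : S * S + S * S + X = S + X * S := by linear_combination h
  have hD := congrArg (d⁄dX R) h'
  simp only [map_add, Derivation.leibniz, derivative_X, smul_eq_mul] at hD
  -- `hD` says `(4S - 1 - X) S' = S - 1`, and `h` gives `(4S - 1 - X)² = 1 - 6X + X²`
  linear_combination (4 * S - 1 - X) * hD + (2 - 8 * d⁄dX R S) * h

theorem coeff_recurrence_of_derivative_eq {a : ℕ → R}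
    (h : (1 - 6 * X + X ^ 2) * d⁄dX R (mk a) + (3 - X) * mk a = 1 - X) (m : ℕ) :
    (m + 3) * a (m + 3) = 3 * (2 * m + 3) * a (m + 2) - m * a (m + 1) := by
  rw [← map_ofNat C 6, ← map_ofNat C 3] at h
  have hc := congrArg (coeff (m + 2)) h
  simp only [add_mul, sub_mul, one_mul, mul_assoc, map_add, map_sub, coeff_derivative, coeff_mk,
    Nat.cast_add, Nat.cast_ofNat, coeff_C_mul, coeff_succ_X_mul, Nat.cast_one, coeff_X_pow_mul',
    le_add_iff_nonneg_left, zero_le, ↓reduceIte, add_tsub_cancel_right, coeff_one,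
    Nat.add_eq_zero_iff, OfNat.ofNat_ne_zero, and_false, coeff_X, Nat.reduceEqDiff, sub_self] at hc
  linear_combination hc

end PowerSeries

namespace SuperCatalan

def term (m i : ℕ) : ℚ := ((m + 2).choose (i + 1) : ℚ) * m.choose i * 2 ^ (i + 1)

def closedFormSum (m : ℕ) : ℚ := ∑ i ∈ range (m + 1), term m i

def certificate (m j : ℕ) : ℚ :=
  (2 * (j : ℚ) ^ 4 - ((2 * m + 4) * (2 * m + 5) + 2) * j ^ 2 - (2 * m + 4) * (2 * m + 5) * j)
    * 2 ^ j * (m + 4).choose (j + 1) * (m + 2).choose j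

theorem term_recurrence_eq_certificate_sub (m i : ℕ) (hi : i < m + 3) :
    ((m : ℚ) + 2) * (m + 4) * ((m + 2) * (m + 3) * term (m + 2) i + (m + 1) * (m + 3) * term m i
      - 3 * (2 * m + 5) * (m + 2) * term (m + 1) i) = certificate m (i + 1) - certificate m i := by
  have hi' : (m : ℚ) + 3 - i ≠ 0 := by
    rw [sub_ne_zero]
    exact_mod_cast hi.ne'
  -- every binomial coefficient involved is a rational multiple of `(m + 2).choose i`
  have e1 : ((m + 1).choose i : ℚ) = (m + 2).choose i * (m + 2 - i) / (m + 2) := by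
    rw [eq_div_iff (by positivity)]
    have h := Nat.cast_add_one_choose_mul (R := ℚ) (m + 1) i
    push_cast at h
    linear_combination -h
  have e0 : (m.choose i : ℚ)
      = (m + 2).choose i * (m + 2 - i) * (m + 1 - i) / ((m + 2) * (m + 1)) := by
    rw [eq_div_iff (by positivity)]
    have h := Nat.cast_add_one_choose_mul (R := ℚ) m i
    rw [e1] at h
    field_simp at h
    linear_combination -h
  have e21 : ((m + 2).choose (i + 1) : ℚ) = (m + 2).choose i * (m + 2 - i) / (i + 1) := by
    rw [eq_div_iff (by positivity)]
    have h := Nat.cast_choose_add_one_mul (R := ℚ) (m + 2) i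
    push_cast at h
    linear_combination h
  have e31 : ((m + 3).choose (i + 1) : ℚ) = (m + 2).choose i * (m + 3) / (i + 1) := by
    rw [eq_div_iff (by positivity)]
    have h := congrArg (Nat.cast : ℕ → ℚ) (Nat.add_one_mul_choose_eq (m + 2) i)
    push_cast at h
    linear_combination -h
  have e42 : ((m + 4).choose (i + 2) : ℚ)
      = (m + 2).choose i * (m + 3) * (m + 4) / ((i + 1) * (i + 2)) := by
    rw [eq_div_iff (by positivity)]
    have h := congrArg (Nat.cast : ℕ → ℚ) (Nat.add_one_mul_choose_eq (m + 3) (i + 1))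
    push_cast at h
    rw [e31] at h
    field_simp at h
    linear_combination -h
  have e41 : ((m + 4).choose (i + 1) : ℚ)
      = (m + 2).choose i * (m + 3) * (m + 4) / ((i + 1) * (m + 3 - i)) := by
    rw [eq_div_iff (mul_ne_zero (by positivity) hi')]
    have h := Nat.cast_add_one_choose_mul (R := ℚ) (m + 3) (i + 1)
    push_cast at h
    rw [e31] at h
    field_simp at h
    linear_combination h
  simp only [term, certificate]
  push_cast
  simp only [show m + 2 + 2 = m + 4 from rfl, show m + 1 + 2 = m + 3 from rfl]
  rw [e0, e1, e21, e31, e41, e42]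
  field_simp
  ring

theorem term_eq_zero {m i : ℕ} (h : m < i) : term m i = 0 := by
  simp [term, Nat.choose_eq_zero_of_lt h]

theorem closedFormSum_eq_sum_range {m N : ℕ} (h : m + 1 ≤ N) :
    closedFormSum m = ∑ i ∈ range N, term m i :=
  sum_subset (range_subset_range.mpr h) fun i hi hi' => by
    simp only [mem_range, not_lt] at hi hi'
    exact term_eq_zero (by omega)

theorem closedFormSum_recurrence (m : ℕ) :
    ((m : ℚ) + 2) * (m + 3) * closedFormSum (m + 2) + (m + 1) * (m + 3) * closedFormSum m
      = 3 * (2 * m + 5) * (m + 2) * closedFormSum (m + 1) := by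
  have htele := sum_congr rfl fun i hi =>
    term_recurrence_eq_certificate_sub m i (mem_range.mp hi)
  rw [sum_range_sub (certificate m)] at htele
  have hend : certificate m (m + 3) - certificate m 0 = 0 := by
    simp [certificate, Nat.choose_succ_self]
  rw [hend, ← mul_sum] at htele
  rw [closedFormSum_eq_sum_range (N := m + 3) (by omega),
    closedFormSum_eq_sum_range (N := m + 3) (by omega),
    closedFormSum_eq_sum_range (N := m + 3) (by omega)]
  have hne : ((m : ℚ) + 2) * (m + 4) ≠ 0 := by positivity
  have := (mul_eq_zero.mp htele).resolve_left hne
  simp only [sum_sub_distrib, sum_add_distrib, ← mul_sum] at this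
  linear_combination this

theorem closedFormSum_eq_sum_Icc (m : ℕ) :
    closedFormSum m = ∑ j ∈ Icc 1 (m + 1), ((m + 2).choose j : ℚ) * m.choose (j - 1) * 2 ^ j := by
  rw [← Ico_add_one_right_eq_Icc, sum_Ico_eq_sum_range, closedFormSum]
  refine sum_congr (by simp) fun i _ => ?_
  simp [term, add_comm]

theorem two_mul_eq_closedFormSum {u : ℕ → ℚ} (h2 : u 2 = 1)
    (hrec : ∀ m : ℕ, (m + 3 : ℚ) * u (m + 3) = 3 * (2 * m + 3) * u (m + 2) - m * u (m + 1))
    (m : ℕ) : 2 * (m + 2) * u (m + 2) = closedFormSum m := by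
  suffices h : ∀ m : ℕ, 2 * ((m : ℚ) + 2) * u (m + 2) = closedFormSum m ∧
      2 * ((m : ℚ) + 3) * u (m + 3) = closedFormSum (m + 1) from (h m).1
  intro m
  induction m with
  | zero =>
    have h3 := hrec 0
    norm_num [closedFormSum, term, sum_range_succ, h2] at h3 ⊢
    linarith
  | succ m ih =>
    refine ⟨by push_cast; linear_combination ih.2, ?_⟩
    have hne : ((m : ℚ) + 2) * (m + 3) ≠ 0 := by positivity
    refine mul_left_cancel₀ hne ?_
    have h := hrec (m + 1)
    push_cast at h ⊢
    linear_combination (2 * ((m : ℚ) + 2) * (m + 3)) * h + 3 * (2 * (m : ℚ) + 5) * (m + 2) * ih.2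
      - ((m : ℚ) + 1) * (m + 3) * ih.1 - closedFormSum_recurrence m

end SuperCatalan

open SuperCatalan in
/-- The `k`-th super-Catalan number equals
`(1/(2k))·Σ_{j=1}^{k-1} binom(k,j) binom(k-2,j-1) 2^j` for `k ≥ 2`. -/
theorem stmt_6 (s : ℕ → ℕ) (hs0 : s 0 = 0) (hs1 : s 1 = 1)
    (hrec : ∀ k, 2 ≤ k → s k = ∑ n ∈ Finset.Icc 2 k,
      ∑ f ∈ Finset.Nat.antidiagonalTuple n k, ∏ i, s (f i)) :
    ∀ k, 2 ≤ k → (s k : ℚ) = (1 / (2 * k : ℚ)) *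
      ∑ j ∈ Finset.Icc 1 (k - 1),
        (Nat.choose k j : ℚ) * (Nat.choose (k - 2) (j - 1) : ℚ) * 2 ^ j := by
  set a : ℕ → ℚ := fun n => s n
  have ha : ∀ k, 2 ≤ k → a k = ∑ n ∈ Icc 2 k, coeff k (mk a ^ n) := by
    intro k hk
    simp only [a, hrec k hk, coeff_pow_eq_sum_antidiagonalTuple, coeff_mk]
    push_cast
    rfl
  have hs2 : a 2 = 1 := by
    simp only [a, hrec 2 le_rfl]
    simp [Finset.Nat.antidiagonalTuple_two, Finset.Nat.sum_antidiagonal_succ, hs0, hs1]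
  have hode := derivative_eq_of_quadratic (quadratic_of_eq_sum_coeff_pow (by simp [a, hs0])
    (by simp [a, hs1]) ha)
  intro k hk
  obtain ⟨m, rfl⟩ := Nat.exists_eq_add_of_le' hk
  have h := two_mul_eq_closedFormSum hs2 (coeff_recurrence_of_derivative_eq hode) m
  rw [closedFormSum_eq_sum_Icc] at h
  simp only [Nat.add_sub_cancel, show m + 2 - 1 = m + 1 by omega, ← h, a]
  field_simp
  push_cast
  ring
end

section
/- The radius of convergence of the generating function S(t) = (1+t-√(1-6t+t²))/4 of the super-Catalan numbers is 3 - 2√2, and hence limsup_k (s_k)^{1/k} = 3 + 2√2. -/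
/-!
Writing `S(t) = ∑ s_k t^k`, the recursion says `S = t + ∑_{n ≥ 2} S^n = t + S²/(1 - S)`, i.e.
`2S² - (1 + t)S + t = 0`, a quadratic with discriminant
`t² - 6t + 1 = (t - (3 - 2√2))(t - (3 + 2√2))`. Summing in `ℝ≥0∞`, the identity holds for every
`t ≥ 0`. If `S(t)` were finite for some `3 - 2√2 < t < 3 + 2√2`, it would be a real root of a
quadratic with negative discriminant, so `S(t) = ∞` there and, by monotonicity, for all
`t > 3 - 2√2`. At `t = 3 - 2√2`, the coefficients of `S` up to `t^(m+1)` only depend on those up to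
`t^m` through the powers `S^n`, `n ≥ 2`, so an induction bounds all partial sums by the fixed point
`(1 + t)/4`. This pins the radius down, and the limsup follows from the Cauchy–Hadamard formula.
-/

open Filter Finset
open scoped ENNReal NNReal

namespace FormalMultilinearSeries

variable {𝕜 E F : Type*} [NontriviallyNormedField 𝕜] [NormedAddCommGroup E] [NormedSpace 𝕜 E]
  [NormedAddCommGroup F] [NormedSpace 𝕜 F] (p : FormalMultilinearSeries 𝕜 E F)

theorem radius_eq_of_tsum_ne_top_of_forall_lt {r : ℝ≥0}
    (hr : ∑' n, (‖p n‖₊ : ℝ≥0∞) * r ^ n ≠ ⊤)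
    (hlt : ∀ t : ℝ≥0, r < t → ∑' n, (‖p n‖₊ : ℝ≥0∞) * t ^ n = ⊤) : p.radius = r := by
  refine le_antisymm ?_ (p.le_radius_of_summable_nnnorm ?_)
  · by_contra! hr_lt
    obtain ⟨t, hrt, htR⟩ := ENNReal.lt_iff_exists_nnreal_btwn.1 hr_lt
    refine ENNReal.tsum_coe_ne_top_iff_summable.2 (p.summable_nnnorm_mul_pow htR) ?_
    push_cast
    exact hlt t (ENNReal.coe_lt_coe.1 hrt)
  · exact ENNReal.tsum_coe_ne_top_iff_summable.1 (by push_cast; exact hr)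

/-- The real form of the Cauchy–Hadamard formula `radius_inv_eq_limsup`. -/
theorem limsup_norm_rpow_eq_inv {r : ℝ} (hr : 0 < r) (h : p.radius = ENNReal.ofReal r) :
    limsup (fun n => ‖p n‖ ^ (1 / (n : ℝ))) atTop = r⁻¹ := by
  set u : ℕ → ℝ≥0 := fun n => ‖p n‖₊ ^ (1 / (n : ℝ))
  have hu : limsup (fun n => (u n : ℝ≥0∞)) atTop = ENNReal.ofReal r⁻¹ := by
    rw [← p.radius_inv_eq_limsup, h, ENNReal.ofReal_inv_of_pos hr]
  have hbdd : IsBoundedUnder (· ≤ ·) atTop u := by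
    refine isBoundedUnder_of_eventually_le (a := (r⁻¹ + 1).toNNReal) ?_
    filter_upwards [eventually_lt_of_limsup_lt <| hu.trans_lt <|
      ENNReal.ofReal_lt_ofReal_iff'.2 ⟨lt_add_one r⁻¹, by positivity⟩] with n hn
    exact (ENNReal.coe_lt_coe.1 hn).le
  have hlimsup : ((limsup u atTop : ℝ≥0) : ℝ≥0∞) = ENNReal.ofReal r⁻¹ := by
    rw [ENNReal.ofNNReal_limsup hbdd, hu]
  have hnorm : (fun n => ‖p n‖ ^ (1 / (n : ℝ))) = fun n => (u n : ℝ) :=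
    funext fun n => by simp [u, NNReal.coe_rpow]
  rw [hnorm, NNReal.toReal_limsup, ← ENNReal.coe_toReal, hlimsup,
    ENNReal.toReal_ofReal (by positivity)]

end FormalMultilinearSeries

namespace SuperCatalan

def powCoeff {R : Type*} [CommSemiring R] (c : ℕ → R) (n k : ℕ) : R :=
  ∑ f ∈ Nat.antidiagonalTuple n k, ∏ i, c (f i)

def IsSolution {R : Type*} [CommSemiring R] (c : ℕ → R) : Prop :=
  ∀ k, 2 ≤ k → c k = ∑ n ∈ Icc 2 k, powCoeff c n k

section CommSemiring

variable {R : Type*} [CommSemiring R] {c : ℕ → R}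

theorem powCoeff_eq_zero_of_lt (hc0 : c 0 = 0) {n k : ℕ} (hkn : k < n) : powCoeff c n k = 0 := by
  refine sum_eq_zero fun f hf => ?_
  obtain ⟨i, hi⟩ : ∃ i, f i = 0 := by
    by_contra! hpos
    have : n ≤ ∑ i, f i := by
      simpa using sum_le_sum fun i (_ : i ∈ univ) => Nat.one_le_iff_ne_zero.2 (hpos i)
    rw [Nat.mem_antidiagonalTuple.1 hf] at this
    omega
  exact prod_eq_zero (mem_univ i) (by rw [hi, hc0])

theorem powCoeff_congr {d : ℕ → R} (hc0 : c 0 = 0) (hd0 : d 0 = 0) {n k : ℕ} (hn : 2 ≤ n)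
    (hdc : ∀ j < k, d j = c j) : powCoeff d n k = powCoeff c n k := by
  refine sum_congr rfl fun f hf => ?_
  by_cases hz : ∃ i, f i = 0
  · obtain ⟨i, hi⟩ := hz
    rw [prod_eq_zero (mem_univ i) (by rw [hi, hd0]), prod_eq_zero (mem_univ i) (by rw [hi, hc0])]
  push Not at hz
  -- all parts are positive, and there are at least two of them
  refine prod_congr rfl fun i _ => hdc _ ?_
  obtain ⟨j, hji⟩ : ∃ j, j ≠ i :=
    Fintype.exists_ne_of_one_lt_card (by simpa using hn.trans_lt' one_lt_two) i
  rw [← Nat.mem_antidiagonalTuple.1 hf]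
  exact single_lt_sum hji (mem_univ i) (mem_univ j) (Nat.pos_of_ne_zero (hz j))
    fun _ _ _ => Nat.zero_le _

theorem IsSolution.mul_pow (h : IsSolution c) (t : R) :
    IsSolution fun k => c k * t ^ k := by
  intro k hk
  simp only [powCoeff]
  rw [h k hk, sum_mul]
  refine sum_congr rfl fun n _ => ?_
  rw [powCoeff, sum_mul]
  refine sum_congr rfl fun f hf => ?_
  rw [prod_mul_distrib, prod_pow_eq_pow_sum, Nat.mem_antidiagonalTuple.1 hf]

theorem IsSolution.natCast {s : ℕ → ℕ} (h : IsSolution s) :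
    IsSolution fun k => (s k : R) := by
  intro k hk
  simp only [h k hk, powCoeff]
  push_cast
  rfl

end CommSemiring

theorem tsum_pow_eq_tsum_powCoeff (c : ℕ → ℝ≥0∞) (n : ℕ) :
    (∑' k, c k) ^ n = ∑' k, powCoeff c n k := by
  have hpow : (∑' k, c k) ^ n = ∑' f : Fin n → ℕ, ∏ i, c (f i) := by
    induction n with
    | zero => simp
    | succ n ih =>
      rw [pow_succ', ih, ← (Fin.consEquiv fun _ => ℕ).tsum_eq, ENNReal.tsum_prod']
      simp [Fin.consEquiv, Fin.prod_univ_succ, ENNReal.tsum_mul_left, ENNReal.tsum_mul_right]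
  rw [hpow, ← (Nat.sigmaAntidiagonalTupleEquivTuple n).tsum_eq, ENNReal.tsum_sigma']
  exact tsum_congr fun k => tsum_subtype (Nat.antidiagonalTuple n k) fun f => ∏ i, c (f i)

theorem tsum_pow_add_two (x : ℝ≥0∞) : ∑' n, x ^ (n + 2) = x ^ 2 * (1 - x)⁻¹ := by
  simp_rw [pow_add, ENNReal.tsum_mul_right, ENNReal.tsum_geometric, mul_comm]

/-- The fixed-point equation `x = t + x²/(1 - x)` is the quadratic `2x² - (1 + t)x + t = 0`, whose
discriminant is `t² - 6t + 1`. -/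
theorem sq_sub_six_mul_add_one_eq_sq {t x : ℝ} (hx : x ≠ 1) (h : x = t + x ^ 2 / (1 - x)) :
    t ^ 2 - 6 * t + 1 = (4 * x - 1 - t) ^ 2 := by
  have hx' : 1 - x ≠ 0 := sub_ne_zero.2 hx.symm
  have hquad : (x - t) * (1 - x) = x ^ 2 := by
    rw [show x - t = x ^ 2 / (1 - x) by linarith, div_mul_cancel₀ _ hx']
  linear_combination 8 * hquad

theorem lt_one_of_eq_add_sq_mul_inv {t x : ℝ≥0∞} (hx : x ≠ ⊤) (h : x = t + x ^ 2 * (1 - x)⁻¹) :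
    x < 1 := by
  by_contra! hx1
  have : x ^ 2 * (1 - x)⁻¹ = ⊤ := by
    rw [tsub_eq_zero_of_le hx1, ENNReal.inv_zero, ENNReal.mul_top (pow_ne_zero _ (by positivity))]
  exact hx (by rw [h, this, add_top])

theorem toReal_sq_sub_six_mul_add_one_nonneg {t x : ℝ≥0∞} (ht : t ≠ ⊤) (hx : x ≠ ⊤)
    (h : x = t + x ^ 2 * (1 - x)⁻¹) : 0 ≤ t.toReal ^ 2 - 6 * t.toReal + 1 := by
  have hx1 := lt_one_of_eq_add_sq_mul_inv hx h
  have hreal : x.toReal = t.toReal + x.toReal ^ 2 / (1 - x.toReal) := by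
    have hne : x ^ 2 * (1 - x)⁻¹ ≠ ⊤ := by rw [h] at hx; exact (ENNReal.add_ne_top.1 hx).2
    rw [div_eq_mul_inv, ← ENNReal.toReal_one, ← ENNReal.toReal_sub_of_le hx1.le ENNReal.one_ne_top,
      ← ENNReal.toReal_inv, ← ENNReal.toReal_pow, ← ENNReal.toReal_mul, ← ENNReal.toReal_add ht hne,
      ← h]
  rw [sq_sub_six_mul_add_one_eq_sq (ENNReal.toReal_lt_of_lt_ofReal (by simpa using hx1)).ne hreal]
  positivity

namespace IsSolution

variable {c : ℕ → ℝ≥0∞}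

theorem eq_ite_add_tsum_powCoeff (h : IsSolution c) (hc0 : c 0 = 0) (k : ℕ) :
    c k = (if k = 1 then c 1 else 0) + ∑' n, powCoeff c (n + 2) k := by
  match k with
  | 0 => simp [hc0, powCoeff_eq_zero_of_lt hc0]
  | 1 => simp [powCoeff_eq_zero_of_lt hc0]
  | k + 2 =>
    rw [if_neg (by omega), zero_add, h _ le_add_self, ← Ico_add_one_right_eq_Icc,
      sum_Ico_eq_sum_range, tsum_eq_sum (s := range (k + 1))]
    · simp only [show k + 2 + 1 - 2 = k + 1 by omega, add_comm 2]
    · intro n hn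
      exact powCoeff_eq_zero_of_lt hc0 (by rw [mem_range] at hn; omega)

theorem tsum_eq (h : IsSolution c) (hc0 : c 0 = 0) :
    ∑' k, c k = c 1 + ∑' n, (∑' k, c k) ^ (n + 2) := by
  calc ∑' k, c k = ∑' k, ((if k = 1 then c 1 else 0) + ∑' n, powCoeff c (n + 2) k) :=
        tsum_congr (h.eq_ite_add_tsum_powCoeff hc0)
    _ = c 1 + ∑' n, ∑' k, powCoeff c (n + 2) k := by
        rw [ENNReal.tsum_add, tsum_ite_eq, ENNReal.tsum_comm]
    _ = c 1 + ∑' n, (∑' k, c k) ^ (n + 2) := by simp_rw [tsum_pow_eq_tsum_powCoeff]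

theorem sum_range_succ_le (h : IsSolution c) (hc0 : c 0 = 0) (m : ℕ) :
    ∑ k ∈ range (m + 1), c k ≤ c 1 + ∑' n, (∑ k ∈ range m, c k) ^ (n + 2) := by
  set d : ℕ → ℝ≥0∞ := fun j => if j < m then c j else 0
  have hd : ∑' j, d j = ∑ j ∈ range m, c j := by
    rw [tsum_eq_sum (s := range m) fun j hj => if_neg (by simpa using hj)]
    exact sum_congr rfl fun j hj => if_pos (by simpa using hj)
  calc ∑ k ∈ range (m + 1), c k
      = ∑ k ∈ range (m + 1), ((if k = 1 then c 1 else 0) + ∑' n, powCoeff d (n + 2) k) := by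
        refine sum_congr rfl fun k hk => ?_
        rw [h.eq_ite_add_tsum_powCoeff hc0]
        congr 2 with n
        refine (powCoeff_congr hc0 (by simp [d, hc0]) le_add_self fun j hj => ?_).symm
        exact if_pos (by rw [mem_range] at hk; omega)
    _ ≤ c 1 + ∑' k, ∑' n, powCoeff d (n + 2) k := by
        rw [sum_add_distrib, sum_ite_eq']
        gcongr
        · split_ifs <;> simp
        · exact ENNReal.sum_le_tsum _
    _ = c 1 + ∑' n, (∑ k ∈ range m, c k) ^ (n + 2) := by
        simp_rw [ENNReal.tsum_comm (f := fun k n => powCoeff d (n + 2) k),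
          ← tsum_pow_eq_tsum_powCoeff, hd]

theorem sq_sub_six_mul_add_one_nonneg (h : IsSolution c) (hc0 : c 0 = 0) (hc1 : c 1 ≠ ⊤)
    (hfin : ∑' k, c k ≠ ⊤) : 0 ≤ (c 1).toReal ^ 2 - 6 * (c 1).toReal + 1 :=
  toReal_sq_sub_six_mul_add_one_nonneg hc1 hfin <| by
    rw [← tsum_pow_add_two]; exact h.tsum_eq hc0

theorem tsum_le (h : IsSolution c) (hc0 : c 0 = 0) {y : ℝ≥0∞}
    (hy : c 1 + y ^ 2 * (1 - y)⁻¹ ≤ y) : ∑' k, c k ≤ y := by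
  rw [ENNReal.tsum_eq_iSup_nat]
  refine iSup_le fun m => ?_
  induction m with
  | zero => simp
  | succ m ih =>
    calc ∑ k ∈ range (m + 1), c k ≤ c 1 + ∑' n, (∑ k ∈ range m, c k) ^ (n + 2) :=
          h.sum_range_succ_le hc0 m
      _ ≤ c 1 + ∑' n, y ^ (n + 2) := by gcongr
      _ ≤ y := by rwa [tsum_pow_add_two]

end IsSolution

theorem three_sub_two_mul_sqrt_two_pos : 0 < 3 - 2 * √2 := by
  nlinarith [Real.sq_sqrt (zero_le_two (α := ℝ)), Real.sqrt_nonneg 2]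

theorem three_sub_two_mul_sqrt_two_lt_one : 3 - 2 * √2 < 1 := by
  nlinarith [Real.one_lt_sqrt_two]

theorem three_sub_two_mul_sqrt_two_inv : (3 - 2 * √2)⁻¹ = 3 + 2 * √2 := by
  refine inv_eq_of_mul_eq_one_right ?_
  linear_combination (-4) * Real.sq_sqrt (zero_le_two (α := ℝ))

theorem sq_sub_six_mul_add_one_eq (t : ℝ) :
    t ^ 2 - 6 * t + 1 = (t - (3 - 2 * √2)) * (t - (3 + 2 * √2)) := by
  linear_combination 4 * Real.sq_sqrt (zero_le_two (α := ℝ))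

/-- At `t = 3 - 2√2` the discriminant vanishes and `(1 + t)/4 = 1 - √2/2` is the fixed point of
`x ↦ t + x²/(1 - x)`. -/
theorem ofReal_three_sub_two_mul_sqrt_two_add_sq_mul_inv :
    ENNReal.ofReal (3 - 2 * √2)
        + ENNReal.ofReal (1 - √2 / 2) ^ 2 * (1 - ENNReal.ofReal (1 - √2 / 2))⁻¹
      = ENNReal.ofReal (1 - √2 / 2) := by
  have hsq := Real.sq_sqrt (zero_le_two (α := ℝ))
  have hy : 0 ≤ 1 - √2 / 2 := by nlinarith [Real.sqrt_nonneg 2]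
  have hsub : 1 - ENNReal.ofReal (1 - √2 / 2) = ENNReal.ofReal (√2 / 2) := by
    rw [← ENNReal.ofReal_one, ← ENNReal.ofReal_sub _ hy, sub_sub_cancel]
  rw [hsub, ← ENNReal.ofReal_inv_of_pos (by positivity), ← ENNReal.ofReal_pow hy,
    ← ENNReal.ofReal_mul (by positivity),
    ← ENNReal.ofReal_add three_sub_two_mul_sqrt_two_pos.le (by positivity)]
  congr 1
  field_simp
  linear_combination (-2) * hsq

section GeneratingFunction

variable {s : ℕ → ℕ} (hs0 : s 0 = 0) (hs1 : s 1 = 1) (hrec : IsSolution s)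
include hs0 hs1 hrec

theorem tsum_mul_pow_ne_top : ∑' k, (s k : ℝ≥0∞) * ENNReal.ofReal (3 - 2 * √2) ^ k ≠ ⊤ := by
  refine ne_top_of_le_ne_top (ENNReal.ofReal_ne_top (r := 1 - √2 / 2)) <|
    (hrec.natCast.mul_pow _).tsum_le (by simp [hs0]) ?_
  simpa [hs1] using ofReal_three_sub_two_mul_sqrt_two_add_sq_mul_inv.le

theorem tsum_mul_pow_eq_top {t : ℝ≥0∞} (ht : ENNReal.ofReal (3 - 2 * √2) < t) :
    ∑' k, (s k : ℝ≥0∞) * t ^ k = ⊤ := by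
  -- the discriminant argument needs `t < 3 + 2√2`, so pass to `min t 1`
  set τ := min t 1
  have hτ : ENNReal.ofReal (3 - 2 * √2) < τ :=
    lt_min ht (ENNReal.ofReal_lt_one.2 three_sub_two_mul_sqrt_two_lt_one)
  have hτ1 : τ ≤ 1 := min_le_right _ _
  have hτ_top : τ ≠ ⊤ := (hτ1.trans_lt ENNReal.one_lt_top).ne
  have hτ_sum : ∑' k, (s k : ℝ≥0∞) * τ ^ k = ⊤ := by
    by_contra hfin
    have := (hrec.natCast.mul_pow τ).sq_sub_six_mul_add_one_nonneg (by simp [hs0])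
      (by simpa [hs1] using hτ_top) hfin
    simp only [hs1, Nat.cast_one, pow_one, one_mul, sq_sub_six_mul_add_one_eq] at this
    have hlo : 3 - 2 * √2 < τ.toReal :=
      (ENNReal.ofReal_lt_iff_lt_toReal three_sub_two_mul_sqrt_two_pos.le hτ_top).1 hτ
    have hhi : τ.toReal < 3 + 2 * √2 :=
      (ENNReal.toReal_le_of_le_ofReal zero_le_one (by simpa using hτ1)).trans_lt
        (by linarith [Real.sqrt_nonneg 2])
    exact this.not_gt (mul_neg_of_pos_of_neg (sub_pos.2 hlo) (sub_neg.2 hhi))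
  refine top_le_iff.1 (hτ_sum ▸ ENNReal.tsum_le_tsum fun k => ?_)
  gcongr
  exact min_le_left _ _

theorem radius_eq :
    (FormalMultilinearSeries.ofScalars ℝ fun k => (s k : ℝ)).radius
      = ENNReal.ofReal (3 - 2 * √2) := by
  have hnorm (n : ℕ) :
      (‖FormalMultilinearSeries.ofScalars ℝ (fun k => (s k : ℝ)) n‖₊ : ℝ≥0∞) = s n := by
    rw [← ENNReal.coe_natCast, ENNReal.coe_inj, ← NNReal.coe_inj, coe_nnnorm,
      FormalMultilinearSeries.ofScalars_norm]
    simp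
  refine FormalMultilinearSeries.radius_eq_of_tsum_ne_top_of_forall_lt _ ?_ fun t ht => ?_
  · simp_rw [hnorm]
    exact tsum_mul_pow_ne_top hs0 hs1 hrec
  · simp_rw [hnorm]
    exact tsum_mul_pow_eq_top hs0 hs1 hrec (ENNReal.coe_lt_coe.2 ht)

theorem limsup_rpow_eq :
    limsup (fun k : ℕ => (s k : ℝ) ^ ((1 : ℝ) / k)) atTop = 3 + 2 * √2 := by
  simpa [FormalMultilinearSeries.ofScalars_norm, three_sub_two_mul_sqrt_two_inv] using
    FormalMultilinearSeries.limsup_norm_rpow_eq_inv _ three_sub_two_mul_sqrt_two_pos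
      (radius_eq hs0 hs1 hrec)

end GeneratingFunction

end SuperCatalan

/-- The radius of convergence of the super-Catalan generating function is
`3 - 2√2`, hence `limsup s_k^{1/k} = 3 + 2√2`. -/
theorem stmt_9 (s : ℕ → ℕ) (hs0 : s 0 = 0) (hs1 : s 1 = 1)
    (hrec : ∀ k, 2 ≤ k → s k = ∑ n ∈ Finset.Icc 2 k,
      ∑ f ∈ Finset.Nat.antidiagonalTuple n k, ∏ i, s (f i)) :
    (FormalMultilinearSeries.ofScalars ℝ (fun k => (s k : ℝ))).radius
        = ENNReal.ofReal (3 - 2 * Real.sqrt 2) ∧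
    Filter.limsup (fun k : ℕ => (s k : ℝ) ^ ((1 : ℝ) / k)) Filter.atTop
        = 3 + 2 * Real.sqrt 2 :=
  ⟨SuperCatalan.radius_eq hs0 hs1 hrec, SuperCatalan.limsup_rpow_eq hs0 hs1 hrec⟩
end

section
/- Let A be the free commutative associative n-ary algebra on one generator x, whose homogeneous component of degree k is one-dimensional if k ≡ 1 mod (n-1) and zero otherwise, so H(A,t) = t/(1-t^{n-1}). Then the generating function of the reduced Gröbner basis of the defining ideal J (with respect to any admissible ordering) is G(B(J),t) = (t/(1-t^{n-1}))^n - t/(1-t^{n-1}) + t = t^n·Σ_{m≥1}(binom(m+n-1, n-1) - 1)·t^{(n-1)m}. -/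
/-!
Write `m = n - 1` and `u = 1 - X ^ m`. Since `u⁻¹ = 1 + X ^ m u⁻¹`, the left-hand side equals
`X ^ n (u⁻¹ ^ n - u⁻¹)`. Substituting `X ^ m` for `X` in `(1 - X)⁻¹ ^ (d + 1) = ∑ C(d + j, d) X ^ j`
gives `u⁻¹ ^ (d + 1) = ∑ C(d + j, d) X ^ (m j)`, and comparing coefficients for `d = m` and
`d = 0` finishes the proof.
-/

open PowerSeries

namespace PowerSeries

variable {k : Type*} [Field k] {m : ℕ}

theorem inv_one_sub_X_pow_eq_expand (hm : m ≠ 0) :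
    (1 - X ^ m : k⟦X⟧)⁻¹ = expand m hm (mk 1) := by
  refine (inv_eq_iff_mul_eq_one ?_).mpr ?_
  · simp [zero_pow hm]
  · rw [← expand_X m hm, ← map_one (expand m hm), ← map_sub, ← map_mul,
      mk_one_mul_one_sub_eq_one, map_one]

theorem inv_one_sub_X_pow_pow_eq_expand (hm : m ≠ 0) (d : ℕ) :
    (1 - X ^ m : k⟦X⟧)⁻¹ ^ (d + 1) = expand m hm (mk fun j ↦ (Nat.choose (d + j) d : k)) := by
  rw [inv_one_sub_X_pow_eq_expand hm, ← map_pow, mk_one_pow_eq_mk_choose_add]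

theorem inv_one_sub_X_pow_eq_one_add (hm : m ≠ 0) :
    (1 - X ^ m : k⟦X⟧)⁻¹ = 1 + X ^ m * (1 - X ^ m)⁻¹ := by
  have hu : (1 - X ^ m : k⟦X⟧) * (1 - X ^ m)⁻¹ = 1 :=
    PowerSeries.mul_inv_cancel _ (by simp [zero_pow hm])
  linear_combination hu

end PowerSeries

/-- The generating function of the reduced Gröbner basis of the defining ideal of
the free commutative associative `n`-ary algebra on one generator:
`(t/(1-t^{n-1}))^n - t/(1-t^{n-1}) + t = t^n · Σ_{m≥0} (binom(m+n-1,n-1)-1) t^{(n-1)m}`. -/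
theorem stmt_16 (n : ℕ) (hn : 2 ≤ n) :
    (PowerSeries.X * (1 - PowerSeries.X ^ (n - 1) : PowerSeries ℚ)⁻¹) ^ n
      - PowerSeries.X * (1 - PowerSeries.X ^ (n - 1) : PowerSeries ℚ)⁻¹
      + PowerSeries.X
    = PowerSeries.X ^ n * PowerSeries.mk (fun k =>
        if (n - 1) ∣ k then (Nat.choose (k / (n - 1) + n - 1) (n - 1) : ℚ) - 1
        else 0) := by
  obtain ⟨m, rfl⟩ : ∃ m, n = m + 1 := ⟨n - 1, by omega⟩
  have hm : m ≠ 0 := by omega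
  have hcoeff : (mk fun k ↦
      if m ∣ k then (Nat.choose (k / m + (m + 1) - 1) m : ℚ) - 1 else 0) =
      (1 - X ^ m : ℚ⟦X⟧)⁻¹ ^ (m + 1) - (1 - X ^ m : ℚ⟦X⟧)⁻¹ := by
    ext j
    rw [inv_one_sub_X_pow_pow_eq_expand hm, inv_one_sub_X_pow_eq_expand hm, map_sub,
      coeff_expand, coeff_expand, coeff_mk]
    split_ifs <;> simp [← add_assoc, add_comm m]
  rw [Nat.add_sub_cancel, hcoeff, mul_pow]
  linear_combination (-X : ℚ⟦X⟧) * inv_one_sub_X_pow_eq_one_add (k := ℚ) hm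
end
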